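/- arXiv:2109.10818 — 4 statements merged into one kernel-verified Lean document; each statement's English description precedes it below -/
import Mathlib

section
/- Fix S > 0 and ξ ∈ ℝ, and define f(x) = N(ξ + (1/S)·ln x) − x^{−2ξ/S}·N(ξ − (1/S)·ln x) for x > 0. If ξ ≥ 0, then f'(x) > 0 for every x > 0. -/
open Real Set Filter Topology MeasureTheory

noncomputable def stdNormalCDF (x : ℝ) : ℝ :=
  (Real.sqrt (2 * Real.pi))⁻¹ * ∫ t in Set.Iic x, Real.exp (-t ^ 2 / 2)

lemma integrable_exp_neg_sq_div_two : Integrable fun t : ℝ => exp (-t ^ 2 / 2) := by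
  simpa [neg_div, div_eq_inv_mul] using integrable_exp_neg_mul_sq (b := (1 / 2 : ℝ)) one_half_pos

lemma stdNormalCDF_pos (x : ℝ) : 0 < stdNormalCDF x := by
  have : NeZero (volume (Iic x)) := ⟨by simp⟩
  exact mul_pos (by positivity) (integral_exp_pos integrable_exp_neg_sq_div_two.integrableOn)

lemma hasDerivAt_stdNormalCDF (x : ℝ) :
    HasDerivAt stdNormalCDF ((√(2 * π))⁻¹ * exp (-x ^ 2 / 2)) x := by
  have hint := integrable_exp_neg_sq_div_two
  have hsplit : stdNormalCDF = fun u => stdNormalCDF 0 +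
      (√(2 * π))⁻¹ * ∫ t in (0 : ℝ)..u, exp (-t ^ 2 / 2) := by
    funext u
    rw [stdNormalCDF, stdNormalCDF,
      ← intervalIntegral.integral_Iic_sub_Iic hint.integrableOn hint.integrableOn]
    ring
  rw [hsplit]
  exact ((intervalIntegral.integral_hasDerivAt_right hint.intervalIntegrable
    hint.1.stronglyMeasurableAtFilter (by fun_prop)).const_mul _).const_add _

theorem f_deriv_pos_of_xi_nonneg (S ξ : ℝ) (hS : 0 < S) (hξ : 0 ≤ ξ)
    (f : ℝ → ℝ)
    (hf : ∀ x > 0, f x = stdNormalCDF (ξ + (1 / S) * Real.log x) -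
        x ^ (-2 * ξ / S) * stdNormalCDF (ξ - (1 / S) * Real.log x)) :
    ∀ x > 0, 0 < deriv f x := by
  intro x hx
  have hlog : HasDerivAt (fun y => 1 / S * log y) (1 / S * x⁻¹) x :=
    (hasDerivAt_log hx.ne').const_mul _
  have hderiv := (((hasDerivAt_stdNormalCDF _).comp x (hlog.const_add ξ)).sub
    ((hasDerivAt_rpow_const (p := -2 * ξ / S) (Or.inl hx.ne')).mul
      ((hasDerivAt_stdNormalCDF _).comp x (hlog.const_sub ξ)))).congr_of_eventuallyEq
    (eventually_of_mem (Ioi_mem_nhds hx) hf)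
  have hN := stdNormalCDF_pos (ξ - 1 / S * log x)
  -- only the middle term, from differentiating `x ^ (-2 * ξ / S)`, needs `ξ ≥ 0`
  calc 0 < (√(2 * π))⁻¹ * exp (-(ξ + 1 / S * log x) ^ 2 / 2) * (1 / S * x⁻¹)
        + 2 * ξ / S * x ^ (-2 * ξ / S - 1) * stdNormalCDF (ξ - 1 / S * log x)
        + x ^ (-2 * ξ / S) * ((√(2 * π))⁻¹ * exp (-(ξ - 1 / S * log x) ^ 2 / 2) * (1 / S * x⁻¹))
        := by positivity
    _ = deriv f x := by
      rw [hderiv.deriv, Function.comp_apply]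
      ring
end

section
/- Fix S > 0 and ξ < 0, and define g(x) = (1/√(2π))·exp(−(ξ − (1/S)·ln x)²/2) + ξ·N(ξ − (1/S)·ln x) for x > 0. Then there exists a unique x₀ ∈ (0,1) such that g(x₀) = 0; moreover g(x) < 0 for 0 < x < x₀ and g(x) > 0 for x > x₀. -/
/-! Substituting `u = ξ - (1/S) log x`, a decreasing bijection `(0, ∞) → ℝ`, turns `g` into
`h(u) = φ(u) + ξ Φ(u)` with `φ` the standard Gaussian density and `Φ` its CDF.
Since `φ' = -u φ`, we get `h' = (ξ - u) φ`, so `h` increases on `(-∞, ξ]` and decreases on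
`[ξ, ∞)`; moreover `h → 0` at `-∞` and `h → ξ < 0` at `+∞`. Hence `h > 0` on `(-∞, ξ]` and `h`
changes sign exactly once, at some `u₀ > ξ`, which corresponds to `x₀ = exp (S (ξ - u₀)) ∈ (0, 1)`.
-/

open Real Set Filter Topology

open MeasureTheory ProbabilityTheory

lemma gaussianPDFReal_zero_one (x : ℝ) :
    gaussianPDFReal 0 1 x = (√(2 * π))⁻¹ * exp (-x ^ 2 / 2) := by
  simp [gaussianPDFReal]

lemma hasDerivAt_gaussianPDFReal_zero_one (x : ℝ) :
    HasDerivAt (gaussianPDFReal 0 1) (-x * gaussianPDFReal 0 1 x) x := by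
  have hexponent : HasDerivAt (fun t : ℝ => -t ^ 2 / 2) (-x) x :=
    ((hasDerivAt_pow 2 x).neg.div_const 2).congr_deriv (by ring)
  rw [gaussianPDFReal_zero_one, show gaussianPDFReal 0 1 = _ from funext gaussianPDFReal_zero_one]
  exact (hexponent.exp.const_mul (√(2 * π))⁻¹).congr_deriv (by ring)

lemma continuous_gaussianPDFReal_zero_one : Continuous (gaussianPDFReal 0 1) :=
  continuous_iff_continuousAt.2 fun x =>
    (hasDerivAt_gaussianPDFReal_zero_one x).differentiableAt.continuousAt

lemma tendsto_gaussianPDFReal_zero_one_cocompact :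
    Tendsto (gaussianPDFReal 0 1) (cocompact ℝ) (𝓝 0) := by
  have h := (tendsto_rpow_abs_mul_exp_neg_mul_sq_cocompact (a := 1 / 2) (by norm_num) 0).const_mul
    (√(2 * π))⁻¹
  rw [mul_zero] at h
  refine h.congr fun x => ?_
  rw [gaussianPDFReal_zero_one, rpow_zero, one_mul]
  ring_nf

lemma stdNormalCDF_eq_integral (x : ℝ) :
    stdNormalCDF x = ∫ t in Iic x, gaussianPDFReal 0 1 t := by
  simp only [stdNormalCDF, gaussianPDFReal_zero_one, integral_const_mul]

lemma hasDerivAt_stdNormalCDF_s5 (x : ℝ) : HasDerivAt stdNormalCDF (gaussianPDFReal 0 1 x) x := by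
  have hint : ∀ a, IntegrableOn (gaussianPDFReal 0 1) (Iic a) :=
    fun _ => (integrable_gaussianPDFReal 0 1).integrableOn
  have hsplit : (fun y => stdNormalCDF 0 + ∫ t in (0 : ℝ)..y, gaussianPDFReal 0 1 t) =
      stdNormalCDF := by
    funext y
    rw [stdNormalCDF_eq_integral, stdNormalCDF_eq_integral,
      ← intervalIntegral.integral_Iic_sub_Iic (hint 0) (hint y)]
    ring
  rw [← hsplit]
  exact ((continuous_gaussianPDFReal_zero_one.integral_hasStrictDerivAt 0 x).hasDerivAt).const_add _

lemma tendsto_stdNormalCDF_atBot : Tendsto stdNormalCDF atBot (𝓝 0) := by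
  rw [show stdNormalCDF = _ from funext stdNormalCDF_eq_integral]
  exact tendsto_integral_Iic_zero tendsto_id

lemma tendsto_stdNormalCDF_atTop : Tendsto stdNormalCDF atTop (𝓝 1) := by
  rw [← integral_gaussianPDFReal_eq_one 0 one_ne_zero,
    show stdNormalCDF = _ from funext stdNormalCDF_eq_integral]
  exact (aecover_Iic tendsto_id).integral_tendsto_of_countably_generated
    (integrable_gaussianPDFReal 0 1)

section Unimodal

variable {f : ℝ → ℝ} {a : ℝ}

lemma pos_of_le_of_strictMonoOn_Iic (hmono : StrictMonoOn f (Iic a))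
    (hbot : Tendsto f atBot (𝓝 0)) {u : ℝ} (hu : u ≤ a) : 0 < f u := by
  have hnonneg : 0 ≤ f (u - 1) := by
    refine le_of_tendsto hbot ?_
    filter_upwards [eventually_le_atBot (u - 1)] with w hw
    exact hmono.monotoneOn (hw.trans (by linarith)) (by simp; linarith) hw
  exact hnonneg.trans_lt (hmono (by simp; linarith) hu (by linarith))

lemma exists_sign_change_of_unimodal {L : ℝ} (hf : Continuous f)
    (hmono : StrictMonoOn f (Iic a)) (hanti : StrictAntiOn f (Ici a))
    (hbot : Tendsto f atBot (𝓝 0)) (htop : Tendsto f atTop (𝓝 L)) (hL : L < 0) :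
    ∃ u₀, a < u₀ ∧ f u₀ = 0 ∧ (∀ u < u₀, 0 < f u) ∧ ∀ u > u₀, f u < 0 := by
  have hfa : 0 < f a := pos_of_le_of_strictMonoOn_Iic hmono hbot le_rfl
  obtain ⟨b, hfb, hab⟩ := ((htop.eventually_lt_const hL).and (eventually_ge_atTop a)).exists
  obtain ⟨u₀, ⟨hau₀, -⟩, hfu₀⟩ :=
    intermediate_value_Icc' hab hf.continuousOn ⟨hfb.le, hfa.le⟩
  have hau₀ : a < u₀ := hau₀.lt_of_ne (by rintro rfl; linarith)
  refine ⟨u₀, hau₀, hfu₀, fun u hu => ?_, fun u hu => ?_⟩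
  · rcases le_or_gt u a with hua | hau
    · exact pos_of_le_of_strictMonoOn_Iic hmono hbot hua
    · exact hfu₀ ▸ hanti hau.le hau₀.le hu
  · exact hfu₀ ▸ hanti hau₀.le (hau₀.trans hu).le hu

end Unimodal

lemma hasDerivAt_gaussianPDFReal_add_mul_stdNormalCDF (ξ u : ℝ) :
    HasDerivAt (fun u => gaussianPDFReal 0 1 u + ξ * stdNormalCDF u)
      ((ξ - u) * gaussianPDFReal 0 1 u) u :=
  ((hasDerivAt_gaussianPDFReal_zero_one u).add
    ((hasDerivAt_stdNormalCDF_s5 u).const_mul ξ)).congr_deriv (by ring)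

lemma exists_sign_change_gaussianPDFReal_add_mul_stdNormalCDF {ξ : ℝ} (hξ : ξ < 0) :
    ∃ u₀, ξ < u₀ ∧ gaussianPDFReal 0 1 u₀ + ξ * stdNormalCDF u₀ = 0 ∧
      (∀ u < u₀, 0 < gaussianPDFReal 0 1 u + ξ * stdNormalCDF u) ∧
      ∀ u > u₀, gaussianPDFReal 0 1 u + ξ * stdNormalCDF u < 0 := by
  have hderiv := hasDerivAt_gaussianPDFReal_add_mul_stdNormalCDF ξ
  have hcont : Continuous fun u => gaussianPDFReal 0 1 u + ξ * stdNormalCDF u :=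
    continuous_iff_continuousAt.2 fun u => (hderiv u).differentiableAt.continuousAt
  refine exists_sign_change_of_unimodal hcont ?_ ?_ ?_ ?_ hξ
  · refine strictMonoOn_of_hasDerivWithinAt_pos (convex_Iic ξ) hcont.continuousOn
      (fun u _ => (hderiv u).hasDerivWithinAt) fun u hu => ?_
    rw [interior_Iic] at hu
    exact mul_pos (sub_pos.2 hu) (gaussianPDFReal_pos 0 1 u one_ne_zero)
  · refine strictAntiOn_of_hasDerivWithinAt_neg (convex_Ici ξ) hcont.continuousOn
      (fun u _ => (hderiv u).hasDerivWithinAt) fun u hu => ?_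
    rw [interior_Ici] at hu
    exact mul_neg_of_neg_of_pos (sub_neg.2 hu) (gaussianPDFReal_pos 0 1 u one_ne_zero)
  · simpa using (tendsto_gaussianPDFReal_zero_one_cocompact.mono_left atBot_le_cocompact).add
      (tendsto_stdNormalCDF_atBot.const_mul ξ)
  · simpa using (tendsto_gaussianPDFReal_zero_one_cocompact.mono_left atTop_le_cocompact).add
      (tendsto_stdNormalCDF_atTop.const_mul ξ)

lemma sub_one_div_mul_log_lt_iff {S ξ u x : ℝ} (hS : 0 < S) (hx : 0 < x) :
    ξ - 1 / S * log x < u ↔ exp (S * (ξ - u)) < x := by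
  rw [← lt_log_iff_exp_lt hx, ← sub_lt_comm, one_div, lt_inv_mul_iff₀ hS]

lemma lt_sub_one_div_mul_log_iff {S ξ u x : ℝ} (hS : 0 < S) (hx : 0 < x) :
    u < ξ - 1 / S * log x ↔ x < exp (S * (ξ - u)) := by
  rw [← log_lt_iff_lt_exp hx, lt_sub_comm, one_div, inv_mul_lt_iff₀ hS]

lemma sub_one_div_mul_log_exp {S : ℝ} (hS : S ≠ 0) (ξ u : ℝ) :
    ξ - 1 / S * log (exp (S * (ξ - u))) = u := by
  rw [log_exp]; field_simp; ring

theorem g_unique_zero (S ξ : ℝ) (hS : 0 < S) (hξ : ξ < 0)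
    (g : ℝ → ℝ)
    (hg : ∀ x > 0, g x = (Real.sqrt (2 * Real.pi))⁻¹ *
        Real.exp (-(ξ - (1 / S) * Real.log x) ^ 2 / 2) +
        ξ * stdNormalCDF (ξ - (1 / S) * Real.log x)) :
    ∃ x₀ ∈ Set.Ioo (0 : ℝ) 1, g x₀ = 0 ∧
      (∀ x ∈ Set.Ioo (0 : ℝ) x₀, g x < 0) ∧
      (∀ x > x₀, 0 < g x) ∧
      ∀ x ∈ Set.Ioo (0 : ℝ) 1, g x = 0 → x = x₀ := by
  have hgh : ∀ x > 0, g x = gaussianPDFReal 0 1 (ξ - 1 / S * log x) +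
      ξ * stdNormalCDF (ξ - 1 / S * log x) := fun x hx => by
    rw [hg x hx, gaussianPDFReal_zero_one]
  obtain ⟨u₀, hξu₀, hzero, hpos, hneg⟩ :=
    exists_sign_change_gaussianPDFReal_add_mul_stdNormalCDF hξ
  set x₀ := exp (S * (ξ - u₀))
  have hx₀ : 0 < x₀ := exp_pos _
  have hg_neg : ∀ x ∈ Ioo 0 x₀, g x < 0 := fun x ⟨hx, hxx₀⟩ => by
    rw [hgh x hx]; exact hneg _ ((lt_sub_one_div_mul_log_iff hS hx).2 hxx₀)
  have hg_pos : ∀ x > x₀, 0 < g x := fun x hxx₀ => by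
    have hx := hx₀.trans hxx₀
    rw [hgh x hx]; exact hpos _ ((sub_one_div_mul_log_lt_iff hS hx).2 hxx₀)
  have hx₀_lt_one : x₀ < 1 := exp_lt_one_iff.2 (mul_neg_of_pos_of_neg hS (by linarith))
  refine ⟨x₀, ⟨hx₀, hx₀_lt_one⟩, ?_, hg_neg, hg_pos, ?_⟩
  · rw [hgh x₀ hx₀, sub_one_div_mul_log_exp hS.ne', hzero]
  · rintro x ⟨hx, -⟩ hgx
    by_contra hne
    rcases lt_or_gt_of_ne hne with hlt | hgt
    · exact (hg_neg x ⟨hx, hlt⟩).ne hgx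
    · exact (hg_pos x hgt).ne' hgx
end

section
/- Fix S > 0 and ξ ∈ ℝ, and define f(x) = N(ξ + (1/S)·ln x) − x^{−2ξ/S}·N(ξ − (1/S)·ln x). Then f is strictly increasing on [1, +∞), and 0 < f(x) < 1 for every x > 1. -/
open Real Set Filter Topology

section Aux
open MeasureTheory

-- basic integrability
lemma gauss_int : Integrable (fun t : ℝ => Real.exp (-t ^ 2 / 2)) := by
  have h := integrable_exp_neg_mul_sq (by norm_num : (0:ℝ) < 1/2)
  refine h.congr ?_
  filter_upwards with t
  ring_nf

lemma gauss_mul_int : Integrable (fun t : ℝ => -t * Real.exp (-t ^ 2 / 2)) := by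
  have h := (integrable_mul_exp_neg_mul_sq (by norm_num : (0:ℝ) < 1/2)).neg
  refine h.congr ?_
  filter_upwards with t
  simp only [Pi.neg_apply]
  ring_nf

noncomputable def II (x : ℝ) : ℝ := ∫ t in Set.Iic x, Real.exp (-t ^ 2 / 2)

lemma hasDerivAt_II (x : ℝ) : HasDerivAt II (Real.exp (-x ^ 2 / 2)) x := by
  have key : ∀ y : ℝ, II y = II 0 + ∫ t in (0:ℝ)..y, Real.exp (-t ^ 2 / 2) := by
    intro y
    have := intervalIntegral.integral_Iic_sub_Iic (gauss_int.integrableOn) (gauss_int.integrableOn)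
      (a := (0:ℝ)) (b := y)
    simp only [II]
    linarith [this]
  have hd : HasDerivAt (fun y => II 0 + ∫ t in (0:ℝ)..y, Real.exp (-t ^ 2 / 2))
      (Real.exp (-x ^ 2 / 2)) x := by
    have hcont : Continuous fun t : ℝ => Real.exp (-t ^ 2 / 2) := by continuity
    exact ((intervalIntegral.integral_hasDerivAt_right
      (gauss_int.intervalIntegrable)
      hcont.aestronglyMeasurable.stronglyMeasurableAtFilter
      hcont.continuousAt)).const_add (II 0)
  exact hd.congr_of_eventuallyEq (by filter_upwards with y using (key y))

lemma II_pos (x : ℝ) : 0 < II x := by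
  rw [II, setIntegral_pos_iff_support_of_nonneg_ae]
  · have : Function.support (fun t : ℝ => Real.exp (-t ^ 2 / 2)) = Set.univ := by
      ext t; simp [Real.exp_ne_zero]
    rw [this, Set.univ_inter]
    simp [Real.volume_Iic]
  · filter_upwards with t using (Real.exp_pos _).le
  · exact gauss_int.integrableOn

lemma Ioi_pos (x : ℝ) : 0 < ∫ t in Set.Ioi x, Real.exp (-t ^ 2 / 2) := by
  rw [setIntegral_pos_iff_support_of_nonneg_ae]
  · have : Function.support (fun t : ℝ => Real.exp (-t ^ 2 / 2)) = Set.univ := by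
      ext t; simp [Real.exp_ne_zero]
    rw [this, Set.univ_inter]
    simp [Real.volume_Ioi]
  · filter_upwards with t using (Real.exp_pos _).le
  · exact gauss_int.integrableOn

lemma gauss_total : ∫ t : ℝ, Real.exp (-t ^ 2 / 2) = Real.sqrt (2 * Real.pi) := by
  have h := integral_gaussian (1/2 : ℝ)
  rw [show Real.pi / (1/2 : ℝ) = 2 * Real.pi by ring] at h
  rw [← h]
  congr 1
  ext t
  ring_nf

lemma II_lt (x : ℝ) : II x < Real.sqrt (2 * Real.pi) := by
  have hsplit := intervalIntegral.integral_Iic_add_Ioi (gauss_int.integrableOn)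
    (gauss_int.integrableOn) (b := x)
  rw [gauss_total] at hsplit
  have := Ioi_pos x
  rw [II]
  linarith

lemma sqrt2pi_pos : 0 < Real.sqrt (2 * Real.pi) :=
  Real.sqrt_pos.2 (by positivity)

-- Mills type inequality, nonneg version
lemma mills_nonneg (v : ℝ) : 0 ≤ Real.exp (-v ^ 2 / 2) + v * II v := by
  rcases le_or_gt 0 v with hv | hv
  · have := II_pos v
    have := Real.exp_pos (-v ^ 2 / 2)
    nlinarith
  · -- key: ∫_{Iic v} (-t) e^{-t²/2} = e^{-v²/2}
    have key : ∫ t in Set.Iic v, -t * Real.exp (-t ^ 2 / 2) = Real.exp (-v ^ 2 / 2) := by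
      have hderiv : ∀ t ∈ Set.Iio v, HasDerivAt (fun t : ℝ => Real.exp (-t ^ 2 / 2))
          (-t * Real.exp (-t ^ 2 / 2)) t := by
        intro t _
        have h1 : HasDerivAt (fun t : ℝ => -t ^ 2 / 2) (-t) t := by
          have := ((hasDerivAt_pow 2 t).neg).div_const 2
          simpa using this.congr_deriv (by push_cast; ring)
        simpa [mul_comm] using h1.exp
      have htend : Tendsto (fun t : ℝ => Real.exp (-t ^ 2 / 2)) atBot (nhds 0) := by
        have h1 : Tendsto (fun t : ℝ => -t ^ 2 / 2) atBot atBot := by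
          apply Filter.Tendsto.atBot_div_const (by norm_num : (0:ℝ) < 2)
          apply Filter.tendsto_neg_atTop_atBot.comp
          have : Tendsto (fun t : ℝ => |t| ^ 2) atBot atTop :=
            (tendsto_pow_atTop (by norm_num)).comp tendsto_abs_atBot_atTop
          refine this.congr fun t => by rw [sq_abs]
        exact Real.tendsto_exp_atBot.comp h1
      have := MeasureTheory.integral_Iic_of_hasDerivAt_of_tendsto
        (f := fun t : ℝ => Real.exp (-t ^ 2 / 2))
        (f' := fun t : ℝ => -t * Real.exp (-t ^ 2 / 2))
        (Real.continuous_exp.comp (by continuity)).continuousWithinAt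
        hderiv gauss_mul_int.integrableOn htend
      simpa using this
    have hcmp : (-v) * II v ≤ Real.exp (-v ^ 2 / 2) := by
      rw [← key, II, ← MeasureTheory.integral_const_mul]
      refine setIntegral_mono_on ?_ ?_ measurableSet_Iic ?_
      · exact (gauss_int.const_mul _).integrableOn
      · exact gauss_mul_int.integrableOn
      · intro t ht
        have : -v ≤ -t := neg_le_neg ht
        have := (Real.exp_pos (-t ^ 2 / 2)).le
        nlinarith
    nlinarith

lemma mills_pos (v : ℝ) : 0 < Real.exp (-v ^ 2 / 2) + v * II v := by
  set g : ℝ → ℝ := fun w => Real.exp (-w ^ 2 / 2) + w * II w with hg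
  have hd : ∀ w : ℝ, HasDerivAt g (II w) w := by
    intro w
    have h1 : HasDerivAt (fun w : ℝ => -w ^ 2 / 2) (-w) w := by
      have := ((hasDerivAt_pow 2 w).neg).div_const 2
      simpa using this.congr_deriv (by push_cast; ring)
    have h2 : HasDerivAt (fun w : ℝ => Real.exp (-w ^ 2 / 2))
        (Real.exp (-w ^ 2 / 2) * (-w)) w := h1.exp
    have h3 : HasDerivAt (fun w : ℝ => w * II w)
        (1 * II w + w * Real.exp (-w ^ 2 / 2)) w :=
      (hasDerivAt_id w).mul (hasDerivAt_II w)
    have := h2.add h3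
    refine this.congr_deriv (by ring)
  have hmono : StrictMono g := by
    apply strictMono_of_deriv_pos
    intro w
    rw [(hd w).deriv]
    exact II_pos w
  have := hmono (show v - 1 < v by linarith)
  have h0 := mills_nonneg (v - 1)
  simp only [hg] at this ⊢
  linarith

end Aux

theorem f_monotone_and_bounds (S ξ : ℝ) (hS : 0 < S)
    (f : ℝ → ℝ)
    (hf : ∀ x > 0, f x = stdNormalCDF (ξ + (1 / S) * Real.log x) -
        x ^ (-2 * ξ / S) * stdNormalCDF (ξ - (1 / S) * Real.log x)) :
    StrictMonoOn f (Set.Ici 1) ∧ ∀ x > 1, 0 < f x ∧ f x < 1 := by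
  set c : ℝ := (Real.sqrt (2 * Real.pi))⁻¹ with hcdef
  have hc : (0:ℝ) < c := inv_pos.2 sqrt2pi_pos
  have hNdef : ∀ x, stdNormalCDF x = c * II x := fun x => rfl
  have hNderiv : ∀ x : ℝ, HasDerivAt stdNormalCDF (c * Real.exp (-x ^ 2 / 2)) x :=
    fun x => (hasDerivAt_II x).const_mul c
  have hNpos : ∀ x, 0 < stdNormalCDF x := fun x => by
    rw [hNdef]; exact mul_pos hc (II_pos x)
  have hNlt : ∀ x, stdNormalCDF x < 1 := fun x => by
    rw [hNdef]
    calc c * II x < c * Real.sqrt (2 * Real.pi) := by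
          exact (mul_lt_mul_iff_right₀ hc).2 (II_lt x)
      _ = 1 := inv_mul_cancel₀ sqrt2pi_pos.ne'
  set F : ℝ → ℝ := fun x => stdNormalCDF (ξ + (1 / S) * Real.log x) -
      Real.exp ((-2 * ξ / S) * Real.log x) * stdNormalCDF (ξ - (1 / S) * Real.log x) with hFdef
  have hfF : ∀ x : ℝ, 0 < x → f x = F x := by
    intro x hx
    rw [hf x hx, hFdef, Real.rpow_def_of_pos hx, mul_comm (Real.log x)]
  set D : ℝ → ℝ := fun x =>
    c * Real.exp (-(ξ + (1 / S) * Real.log x) ^ 2 / 2) * (1 / S * x⁻¹) -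
      (Real.exp ((-2 * ξ / S) * Real.log x) * (-2 * ξ / S * x⁻¹) *
          stdNormalCDF (ξ - (1 / S) * Real.log x) +
        Real.exp ((-2 * ξ / S) * Real.log x) *
          (c * Real.exp (-(ξ - (1 / S) * Real.log x) ^ 2 / 2) * -(1 / S * x⁻¹))) with hDdef
  have hFd : ∀ x : ℝ, 0 < x → HasDerivAt F (D x) x := by
    intro x hx
    have hlog := Real.hasDerivAt_log hx.ne'
    have ha : HasDerivAt (fun x : ℝ => ξ + 1 / S * Real.log x) (1 / S * x⁻¹) x :=
      (hlog.const_mul (1 / S)).const_add ξ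
    have hb : HasDerivAt (fun x : ℝ => ξ - 1 / S * Real.log x) (-(1 / S * x⁻¹)) x :=
      (hlog.const_mul (1 / S)).const_sub ξ
    have h1 : HasDerivAt (fun x : ℝ => stdNormalCDF (ξ + 1 / S * Real.log x))
        (c * Real.exp (-(ξ + 1 / S * Real.log x) ^ 2 / 2) * (1 / S * x⁻¹)) x :=
      (hNderiv _).comp x ha
    have hE : HasDerivAt (fun x : ℝ => Real.exp ((-2 * ξ / S) * Real.log x))
        (Real.exp ((-2 * ξ / S) * Real.log x) * (-2 * ξ / S * x⁻¹)) x := by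
      have := (hlog.const_mul (-2 * ξ / S)).exp
      exact this
    have h2 : HasDerivAt (fun x : ℝ => stdNormalCDF (ξ - 1 / S * Real.log x))
        (c * Real.exp (-(ξ - 1 / S * Real.log x) ^ 2 / 2) * -(1 / S * x⁻¹)) x :=
      (hNderiv _).comp x hb
    exact h1.sub (hE.mul h2)
  have hDpos : ∀ x : ℝ, 1 ≤ x → 0 < D x := by
    intro x hx1
    have hx : (0:ℝ) < x := lt_of_lt_of_le one_pos hx1
    set u : ℝ := 1 / S * Real.log x with hudef
    have hu : 0 ≤ u := mul_nonneg (by positivity) (Real.log_nonneg hx1)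
    have hk : (0:ℝ) < 1 / S * x⁻¹ := by positivity
    have hid : Real.exp (-(ξ + u) ^ 2 / 2) =
        Real.exp ((-2 * ξ / S) * Real.log x) * Real.exp (-(ξ - u) ^ 2 / 2) := by
      rw [← Real.exp_add]
      congr 1
      rw [hudef]
      ring
    have hkey : 0 < Real.exp (-(ξ - u) ^ 2 / 2) + ξ * II (ξ - u) := by
      have h1 := mills_pos (ξ - u)
      have h2 := II_pos (ξ - u)
      nlinarith [mul_nonneg hu h2.le]
    have hE : (0:ℝ) < Real.exp ((-2 * ξ / S) * Real.log x) := Real.exp_pos _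
    rw [hDdef]
    simp only [hNdef]
    calc (0:ℝ) < 2 * (Real.exp ((-2 * ξ / S) * Real.log x) * c * (1 / S * x⁻¹)) *
          (Real.exp (-(ξ - u) ^ 2 / 2) + ξ * II (ξ - u)) := by positivity
      _ = c * Real.exp (-(ξ + u) ^ 2 / 2) * (1 / S * x⁻¹) -
          (Real.exp ((-2 * ξ / S) * Real.log x) * (-2 * ξ / S * x⁻¹) * (c * II (ξ - u)) +
            Real.exp ((-2 * ξ / S) * Real.log x) *
              (c * Real.exp (-(ξ - u) ^ 2 / 2) * -(1 / S * x⁻¹))) := by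
          rw [hid, hudef]
          ring
  have hmonoF : StrictMonoOn F (Set.Ici 1) := by
    apply strictMonoOn_of_deriv_pos (convex_Ici 1)
    · intro x hx
      exact ((hFd x (lt_of_lt_of_le one_pos hx)).continuousAt).continuousWithinAt
    · intro x hx
      rw [interior_Ici] at hx
      have hx0 : (0:ℝ) < x := lt_trans one_pos hx
      rw [(hFd x hx0).deriv]
      exact hDpos x hx.le
  have hmono : StrictMonoOn f (Set.Ici 1) := by
    intro a ha b hb hab
    rw [hfF a (lt_of_lt_of_le one_pos ha), hfF b (lt_of_lt_of_le one_pos hb)]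
    exact hmonoF ha hb hab
  refine ⟨hmono, ?_⟩
  intro x hx
  have hx0 : (0:ℝ) < x := lt_trans one_pos hx
  constructor
  · have hf1 : f 1 = 0 := by
      rw [hf 1 one_pos]
      simp [Real.log_one]
    have := hmono (Set.self_mem_Ici) (Set.mem_Ici.2 hx.le) hx
    rw [hf1] at this
    exact this
  · rw [hf x hx0]
    have h1 : stdNormalCDF (ξ + 1 / S * Real.log x) < 1 := hNlt _
    have h2 : 0 < x ^ (-2 * ξ / S) * stdNormalCDF (ξ - 1 / S * Real.log x) :=
      mul_pos (Real.rpow_pos_of_pos hx0 _) (hNpos _)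
    linarith
end

section
/- Let σ > 0, c ∈ ℝ, T > 0 and suppose u(x,t) is a twice continuously differentiable (in x), once in t, solution of ∂u/∂t + ½σ²x²∂²u/∂x² + c·x·∂u/∂x = 0 on x > 0, 0 < t < T. Then the image function v(x,t) = x^{1 − 2c/σ²}·u(1/x, t) also satisfies ∂v/∂t + ½σ²x²∂²v/∂x² + c·x·∂v/∂x = 0 on x > 0, 0 < t < T. -/
open Real Set Filter Topology

/-!
Write `K_α f (x) = x ^ α * f (1 / x)`. The chain rule gives `(K_α f)' = α K_{α-1} f - K_{α-2} f'`, and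
applying it twice shows that the spatial part `A f = ½σ²x² f'' + c x f'` of the operator satisfies
`A (K_α f)(x) = x ^ α (A f)(1 / x)` precisely when `σ² (α - 1) = -2c`, i.e. `α = 1 - 2c/σ²`.
Since `K_α` does not touch the time variable, `∂ₜ v + A v` at `x` is `x ^ α` times `∂ₜ u + A u` at `1 / x`.
-/

noncomputable def inversionImage (α : ℝ) (f : ℝ → ℝ) (x : ℝ) : ℝ :=
  x ^ α * f x⁻¹

noncomputable def blackScholesGenerator (σ c : ℝ) (f : ℝ → ℝ) (x : ℝ) : ℝ :=
  (1 / 2) * σ ^ 2 * x ^ 2 * deriv (deriv f) x + c * x * deriv f x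

section InversionImage

variable {α x : ℝ} {f : ℝ → ℝ}

theorem hasDerivAt_inversionImage {f' : ℝ} (hx : 0 < x) (hf : HasDerivAt f f' x⁻¹) :
    HasDerivAt (inversionImage α f) (α * x ^ (α - 1) * f x⁻¹ - x ^ (α - 2) * f') x := by
  have h : HasDerivAt (inversionImage α f) (α * x ^ (α - 1) * f x⁻¹ + x ^ α * (f' * -(x ^ 2)⁻¹)) x :=
    (hasDerivAt_rpow_const (Or.inl hx.ne')).mul (hf.comp x (hasDerivAt_inv hx.ne'))
  convert h using 1
  simp only [rpow_sub hx, rpow_one, rpow_two]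
  field_simp
  ring

theorem deriv_inversionImage_eqOn (hf : DifferentiableOn ℝ f (Ioi 0)) :
    EqOn (deriv (inversionImage α f))
      (fun y => α * inversionImage (α - 1) f y - inversionImage (α - 2) (deriv f) y) (Ioi 0) := by
  intro y hy
  rw [(hasDerivAt_inversionImage hy
    ((hf.differentiableAt (Ioi_mem_nhds (inv_pos.2 hy))).hasDerivAt)).deriv]
  simp only [inversionImage, mul_assoc]

theorem deriv_deriv_inversionImage (hx : 0 < x) (hf : DifferentiableOn ℝ f (Ioi 0))
    (hf' : DifferentiableAt ℝ (deriv f) x⁻¹) :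
    deriv (deriv (inversionImage α f)) x =
      α * ((α - 1) * x ^ (α - 1 - 1) * f x⁻¹ - x ^ (α - 1 - 2) * deriv f x⁻¹) -
        ((α - 2) * x ^ (α - 2 - 1) * deriv f x⁻¹ - x ^ (α - 2 - 2) * deriv (deriv f) x⁻¹) := by
  have hfx := (hf.differentiableAt (Ioi_mem_nhds (inv_pos.2 hx))).hasDerivAt
  rw [((deriv_inversionImage_eqOn hf).eventuallyEq_of_mem (Ioi_mem_nhds hx)).deriv_eq]
  exact (((hasDerivAt_inversionImage hx hfx).const_mul α).sub
    (hasDerivAt_inversionImage hx hf'.hasDerivAt)).deriv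

end InversionImage

theorem blackScholesGenerator_inversionImage {σ c x : ℝ} {f : ℝ → ℝ} (hσ : σ ≠ 0) (hx : 0 < x)
    (hf : DifferentiableOn ℝ f (Ioi 0)) (hf' : DifferentiableAt ℝ (deriv f) x⁻¹) :
    blackScholesGenerator σ c (inversionImage (1 - 2 * c / σ ^ 2) f) x =
      x ^ (1 - 2 * c / σ ^ 2) * blackScholesGenerator σ c f x⁻¹ := by
  have hα : σ ^ 2 * (1 - 2 * c / σ ^ 2) = σ ^ 2 - 2 * c := by field_simp
  generalize 1 - 2 * c / σ ^ 2 = α at hα ⊢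
  have hfx := (hf.differentiableAt (Ioi_mem_nhds (inv_pos.2 hx))).hasDerivAt
  simp only [blackScholesGenerator, deriv_deriv_inversionImage hx hf hf',
    (hasDerivAt_inversionImage hx hfx).deriv, rpow_sub hx, rpow_one, rpow_two]
  generalize f x⁻¹ = a, deriv f x⁻¹ = b, deriv (deriv f) x⁻¹ = d
  field_simp
  linear_combination (x ^ 2 * α * a - 2 * x * b) * hα

theorem image_solution_principle_general (σ c T : ℝ) (hσ : 0 < σ)
    (u : ℝ → ℝ → ℝ)
    (hreg_x : ∀ t ∈ Set.Ioo (0 : ℝ) T, ContDiffOn ℝ 2 (fun x => u x t) (Set.Ioi 0))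
    (hu : ∀ x > 0, ∀ t ∈ Set.Ioo (0 : ℝ) T,
      deriv (fun s => u x s) t +
        (1 / 2) * σ ^ 2 * x ^ 2 * deriv (deriv (fun y => u y t)) x +
        c * x * deriv (fun y => u y t) x = 0)
    (v : ℝ → ℝ → ℝ)
    (hv : ∀ x > 0, ∀ t ∈ Set.Ioo (0 : ℝ) T,
      v x t = x ^ (1 - 2 * c / σ ^ 2) * u (1 / x) t) :
    ∀ x > 0, ∀ t ∈ Set.Ioo (0 : ℝ) T,
      deriv (fun s => v x s) t +
        (1 / 2) * σ ^ 2 * x ^ 2 * deriv (deriv (fun y => v y t)) x +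
        c * x * deriv (fun y => v y t) x = 0 := by
  intro x hx t ht
  have hspace : (fun y => v y t) =ᶠ[𝓝 x] inversionImage (1 - 2 * c / σ ^ 2) (fun y => u y t) := by
    filter_upwards [Ioi_mem_nhds hx] with y hy
    rw [hv y hy t ht, one_div, inversionImage]
  have htime : (fun s => v x s) =ᶠ[𝓝 t] fun s => x ^ (1 - 2 * c / σ ^ 2) * u x⁻¹ s := by
    filter_upwards [isOpen_Ioo.mem_nhds ht] with s hs
    rw [hv x hx s hs, one_div]
  have hf := hreg_x t ht
  have hf' : DifferentiableAt ℝ (deriv fun y => u y t) x⁻¹ :=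
    ((hf.deriv_of_isOpen isOpen_Ioi (m := 1) (by norm_num)).differentiableOn one_ne_zero)
      |>.differentiableAt (Ioi_mem_nhds (inv_pos.2 hx))
  have hgen := blackScholesGenerator_inversionImage (c := c) hσ.ne' hx
    (hf.differentiableOn (by norm_num)) hf'
  have hux := hu x⁻¹ (inv_pos.2 hx) t ht
  rw [add_assoc] at hux ⊢
  rw [htime.deriv_eq, deriv_const_mul_field, hspace.deriv.deriv_eq, hspace.deriv_eq]
  change _ + blackScholesGenerator σ c _ x = 0
  change _ + blackScholesGenerator σ c _ x⁻¹ = 0 at hux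
  rw [hgen, ← mul_add, hux, mul_zero]

theorem image_solution_principle (σ c T : ℝ) (hσ : 0 < σ) (hT : 0 < T)
    (u : ℝ → ℝ → ℝ)
    (hreg_x : ∀ t ∈ Set.Ioo (0 : ℝ) T, ContDiffOn ℝ 2 (fun x => u x t) (Set.Ioi 0))
    (hreg_t : ∀ x > (0 : ℝ), ∀ t ∈ Set.Ioo (0 : ℝ) T, DifferentiableAt ℝ (fun s => u x s) t)
    (hu : ∀ x > 0, ∀ t ∈ Set.Ioo (0 : ℝ) T,
      deriv (fun s => u x s) t +
        (1 / 2) * σ ^ 2 * x ^ 2 * deriv (deriv (fun y => u y t)) x +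
        c * x * deriv (fun y => u y t) x = 0)
    (v : ℝ → ℝ → ℝ)
    (hv : ∀ x > 0, ∀ t ∈ Set.Ioo (0 : ℝ) T,
      v x t = x ^ (1 - 2 * c / σ ^ 2) * u (1 / x) t) :
    ∀ x > 0, ∀ t ∈ Set.Ioo (0 : ℝ) T,
      deriv (fun s => v x s) t +
        (1 / 2) * σ ^ 2 * x ^ 2 * deriv (deriv (fun y => v y t)) x +
        c * x * deriv (fun y => v y t) x = 0 :=
  image_solution_principle_general σ c T hσ u hreg_x hu v hv
end
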